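/- arXiv:math/0602106 — 6 statements merged into one kernel-verified Lean document; each statement's English description precedes it below -/
import Mathlib

section
/- Let f ⊆ k be a Galois field extension of degree d, and let M ⊆ ℕ be the additive submonoid generated by the prime divisors of d. If α ∈ f[t] is a polynomial of degree n that splits in k[t] and n ∉ M, then α has a root in f. -/
/-!
If `α` had no root in `f`, every irreducible factor of `α` would have degree different from `1`;
since it splits in `k`, its degree divides `[k : f]`, so it is `0` or a multiple of a prime
divisor of `[k : f]`. Hence `deg α`, the sum of these degrees, would lie in `M`.
-/

open Polynomial

theorem Nat.mem_closure_prime_dvd_of_dvd {m d : ℕ} (hmd : m ∣ d) (hm : m ≠ 1) :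
    m ∈ AddSubmonoid.closure {p : ℕ | p.Prime ∧ p ∣ d} := by
  obtain ⟨p, hp, c, rfl⟩ := Nat.exists_prime_and_dvd hm
  rw [mul_comm, ← smul_eq_mul]
  exact AddSubmonoid.nsmul_mem _
    (AddSubmonoid.subset_closure (Set.mem_ofPred.mpr ⟨hp, (dvd_mul_right p c).trans hmd⟩)) c

theorem Polynomial.natDegree_ne_one_of_forall_not_isRoot {K : Type*} [Field K] {p : K[X]}
    (hp : ∀ r, ¬ p.IsRoot r) : p.natDegree ≠ 1 := fun h ↦
  let ⟨r, hr⟩ := exists_root_of_degree_eq_one <|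
    (degree_eq_iff_natDegree_eq_of_pos one_pos).mpr h
  hp r hr

theorem Polynomial.natDegree_mem_closure_of_splits_of_forall_not_isRoot
    {K L : Type*} [Field K] [Field L] [Algebra K L] (α : K[X])
    (hsplit : (α.map (algebraMap K L)).Splits) (hroot : ∀ r, ¬ α.IsRoot r) :
    α.natDegree ∈ AddSubmonoid.closure {p : ℕ | p.Prime ∧ p ∣ Module.finrank K L} := by
  induction α using WfDvdMonoid.induction_on_irreducible with
  | zero => simp
  | unit u hu => simp [natDegree_eq_zero_of_isUnit hu]
  | mul a p ha hp ih =>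
    have hpa : (p * a).map (algebraMap K L) ≠ 0 := map_ne_zero (mul_ne_zero hp.ne_zero ha)
    have hpsplit := hsplit.of_dvd hpa (map_dvd _ (dvd_mul_right p a))
    have hasplit := hsplit.of_dvd hpa (map_dvd _ (dvd_mul_left a p))
    have hproot : ∀ r, ¬ p.IsRoot r := fun r hr ↦ hroot r (hr.dvd (dvd_mul_right p a))
    have haroot : ∀ r, ¬ a.IsRoot r := fun r hr ↦ hroot r (hr.dvd (dvd_mul_left a p))
    have hpmem := Nat.mem_closure_prime_dvd_of_dvd (hp.natDegree_dvd_finrank hpsplit)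
      (natDegree_ne_one_of_forall_not_isRoot hproot)
    rw [natDegree_mul hp.ne_zero ha]
    exact AddSubmonoid.add_mem _ hpmem (ih hasplit haroot)

theorem stmt_0_general {f k : Type*} [Field f] [Field k] [Algebra f k]
    (α : Polynomial f)
    (hsplit : (α.map (algebraMap f k)).Splits)
    (hn : α.natDegree ∉
      AddSubmonoid.closure {p : ℕ | p.Prime ∧ p ∣ Module.finrank f k}) :
    ∃ r : f, α.IsRoot r := by
  by_contra! hroot
  exact hn (natDegree_mem_closure_of_splits_of_forall_not_isRoot α hsplit hroot)

theorem stmt_0 {f k : Type*} [Field f] [Field k] [Algebra f k]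
    [FiniteDimensional f k] [IsGalois f k]
    (α : Polynomial f)
    (hsplit : (α.map (algebraMap f k)).Splits)
    (hn : α.natDegree ∉
      AddSubmonoid.closure {p : ℕ | p.Prime ∧ p ∣ Module.finrank f k}) :
    ∃ r : f, α.IsRoot r :=
  stmt_0_general α hsplit hn
end

section
/- Let f ⊆ k be a Galois extension of degree d and M the additive submonoid of ℕ generated by the primes dividing d. If α ∈ f[t] has degree n, splits in k[t], and n ∉ M, then the sum of the multiplicities of the roots of α lying in f is not in M (in particular it is positive). -/
/-!
Split off the roots of `α` in `f`: `α = (∏ (X - a)) * β` with `β` root-free over `f`. Every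
irreducible factor `q` of `β` acquires a root in `k`, so `deg q` divides `[k : f]`, and
`deg q ≠ 1` because `q` has no root in `f`; hence `deg q`, and so `deg β`, lies in `M`.
Since `M` is closed under addition, `deg α = #roots + deg β ∉ M` forces `#roots ∉ M`.
-/

open Polynomial

section

variable {K L : Type*} [Field K] [Field L] [Algebra K L] [FiniteDimensional K L]

theorem Irreducible.natDegree_dvd_finrank_of_aeval_eq_zero {q : K[X]} (hq : Irreducible q)
    {x : L} (hx : aeval x q = 0) : q.natDegree ∣ Module.finrank K L := by
  have hlc : q.leadingCoeff⁻¹ ≠ 0 := inv_ne_zero (leadingCoeff_ne_zero.mpr hq.ne_zero)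
  rw [← natDegree_mul_C hlc, minpoly.eq_of_irreducible hq hx]
  exact minpoly.degree_dvd (IsIntegral.of_finite K x)

theorem Irreducible.natDegree_dvd_finrank_of_splits {q : K[X]} (hq : Irreducible q)
    (hsplit : (q.map (algebraMap K L)).Splits) : q.natDegree ∣ Module.finrank K L := by
  obtain ⟨x, hx⟩ := hsplit.exists_eval_eq_zero <| by
    rw [degree_map]
    exact (degree_pos_of_irreducible hq).ne'
  exact hq.natDegree_dvd_finrank_of_aeval_eq_zero (by rwa [aeval_def, eval₂_eq_eval_map])

theorem Irreducible.natDegree_ne_one_of_roots_eq_zero {q : K[X]} (hq : Irreducible q)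
    (hroots : q.roots = 0) : q.natDegree ≠ 1 := by
  intro hdeg
  obtain ⟨a, ha⟩ :=
    exists_root_of_degree_eq_one ((degree_eq_iff_natDegree_eq hq.ne_zero).mpr hdeg)
  simpa [hroots] using (mem_roots hq.ne_zero).mpr ha

theorem Polynomial.natDegree_mem_closure_of_roots_eq_zero {β : K[X]}
    (hsplit : (β.map (algebraMap K L)).Splits) (hroots : β.roots = 0) :
    β.natDegree ∈ AddSubmonoid.closure {p : ℕ | p.Prime ∧ p ∣ Module.finrank K L} := by
  induction β using WfDvdMonoid.induction_on_irreducible with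
  | zero => simp
  | unit u hu => simp [natDegree_eq_zero_of_isUnit hu]
  | mul a q ha hq ih =>
    have hqa : q * a ≠ 0 := mul_ne_zero hq.ne_zero ha
    rw [roots_mul hqa, add_eq_zero] at hroots
    rw [Polynomial.map_mul,
      splits_mul (Polynomial.map_ne_zero hq.ne_zero) (Polynomial.map_ne_zero ha)] at hsplit
    rw [natDegree_mul hq.ne_zero ha]
    refine add_mem (Nat.mem_closure_prime_dvd_of_dvd ?_ ?_) (ih hsplit.2 hroots.2)
    · exact hq.natDegree_dvd_finrank_of_splits hsplit.1
    · exact hq.natDegree_ne_one_of_roots_eq_zero hroots.1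

end

theorem stmt_1_general {f k : Type*} [Field f] [Field k] [Algebra f k]
    [FiniteDimensional f k]
    (α : Polynomial f)
    (hsplit : (α.map (algebraMap f k)).Splits)
    (hn : α.natDegree ∉
      AddSubmonoid.closure {p : ℕ | p.Prime ∧ p ∣ Module.finrank f k}) :
    Multiset.card α.roots ∉
      AddSubmonoid.closure {p : ℕ | p.Prime ∧ p ∣ Module.finrank f k} := by
  have hα : α ≠ 0 := by
    rintro rfl
    exact hn (by simp)
  obtain ⟨β, hprod, hdeg, hroots⟩ := exists_prod_multiset_X_sub_C_mul α
  have hβsplit : (β.map (algebraMap f k)).Splits :=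
    hsplit.of_dvd (Polynomial.map_ne_zero hα) (Polynomial.map_dvd _ (Dvd.intro_left _ hprod))
  have hβ := natDegree_mem_closure_of_roots_eq_zero hβsplit hroots
  rw [← hdeg] at hn
  exact fun hcard ↦ hn (add_mem hcard hβ)

theorem stmt_1 {f k : Type*} [Field f] [Field k] [Algebra f k]
    [FiniteDimensional f k] [IsGalois f k]
    (α : Polynomial f)
    (hsplit : (α.map (algebraMap f k)).Splits)
    (hn : α.natDegree ∉
      AddSubmonoid.closure {p : ℕ | p.Prime ∧ p ∣ Module.finrank f k}) :
    Multiset.card α.roots ∉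
      AddSubmonoid.closure {p : ℕ | p.Prime ∧ p ∣ Module.finrank f k} :=
  stmt_1_general α hsplit hn
end

section
/- Let V be a finite-dimensional vector space over a field f, k a Galois extension of f, and M the additive submonoid of ℕ generated by the primes dividing [k : f]. Let g be a nilpotent Lie algebra of linear operators on V such that for each A ∈ g, the minimal polynomial π_A splits in k and is a power of an irreducible polynomial in f[t]. If dim V ∉ M, then for every A ∈ g there exists r_A ∈ f with π_A(t) = (t - r_A)^{m_A}. -/
/-!
Fix `A ∈ g` with `π_A = p ^ m`, `p` irreducible; `V ≠ 0` because `0 ∈ M`, so `m > 0` and `p`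
has a root in `k`, whence `deg p ∣ [k : f]`. Also `deg p ∣ dim V`: the kernel of `p(A)` is a vector
space over the field `f[t]/(p)`, and rank–nullity for `p(A)` reduces the claim to its range, on
which `p(A) ^ (m - 1)` vanishes. If `deg p > 1`, a prime factor `ℓ` of `deg p` divides both `[k : f]`
and `dim V`, so `dim V ∈ ℓ ℕ ⊆ M`. Hence `deg p = 1`, and `π_A` being monic, `π_A = (t - r) ^ m`.
-/

open Polynomial

attribute [local instance 100] LieRing.ofAssociativeRing

namespace Module.End

variable {R V : Type*} [CommRing R] [AddCommGroup V] [Module R V]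

theorem coe_aeval_restrict_apply (A : Module.End R V) {W : Submodule R V}
    (hW : ∀ x ∈ W, A x ∈ W) (p : R[X]) (w : W) :
    (aeval (A.restrict hW) p w : V) = aeval A p w := by
  induction p using Polynomial.induction_on' with
  | add p q hp hq => simp [hp, hq]
  | monomial n c => simp [pow_restrict n hW, LinearMap.restrict_apply]

theorem aeval_restrict_eq_zero_iff (A : Module.End R V) {W : Submodule R V}
    (hW : ∀ x ∈ W, A x ∈ W) (p : R[X]) :
    aeval (A.restrict hW) p = 0 ↔ ∀ x ∈ W, aeval A p x = 0 := by
  simp only [LinearMap.ext_iff, Subtype.ext_iff, coe_aeval_restrict_apply, LinearMap.zero_apply,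
    ZeroMemClass.coe_zero, Subtype.forall]

theorem mapsTo_range_aeval (A : Module.End R V) (p : R[X]) :
    ∀ x ∈ LinearMap.range (aeval A p), A x ∈ LinearMap.range (aeval A p) := by
  rintro _ ⟨v, rfl⟩
  exact ⟨A v, by simpa using (LinearMap.congr_fun ((Commute.all X p).map (aeval A)).eq v).symm⟩

theorem mapsTo_ker_aeval (A : Module.End R V) (p : R[X]) :
    ∀ x ∈ LinearMap.ker (aeval A p), A x ∈ LinearMap.ker (aeval A p) := by
  intro x hx
  have := LinearMap.congr_fun ((Commute.all X p).map (aeval A)).eq x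
  simp_all

variable {K : Type*} [Field K]

/-- `V` is a vector space over the field `K[X] ⧸ (p)`, of `K`-dimension `deg p`. -/
theorem natDegree_dvd_finrank_of_aeval_eq_zero {W : Type*} [AddCommGroup W] [Module K W]
    {p : K[X]} (hp : Irreducible p) (A : Module.End K W) (hA : aeval A p = 0) :
    p.natDegree ∣ Module.finrank K W := by
  have : Fact (Irreducible p) := ⟨hp⟩
  let φ : AdjoinRoot p →ₐ[K] Module.End K W :=
    Ideal.Quotient.liftₐ _ (aeval A) fun q hq => by
      obtain ⟨c, rfl⟩ := Ideal.mem_span_singleton'.mp hq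
      rw [map_mul, hA, mul_zero]
  let : Module (AdjoinRoot p) W := Module.compHom W φ.toRingHom
  have : IsScalarTower K (AdjoinRoot p) W :=
    ⟨fun c x v => show φ (c • x) v = c • φ x v by rw [map_smul, LinearMap.smul_apply]⟩
  let pb := AdjoinRoot.powerBasis hp.ne_zero
  have : FiniteDimensional K (AdjoinRoot p) := pb.finite
  refine ⟨Module.finrank (AdjoinRoot p) W, ?_⟩
  rw [← Module.finrank_mul_finrank K (AdjoinRoot p) W, pb.finrank]
  rfl

theorem natDegree_dvd_finrank_of_aeval_pow_eq_zero {W : Type*} [AddCommGroup W] [Module K W]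
    [FiniteDimensional K W] {p : K[X]} (hp : Irreducible p) (m : ℕ) (A : Module.End K W)
    (hA : aeval A (p ^ (m + 1)) = 0) : p.natDegree ∣ Module.finrank K W := by
  induction m generalizing W with
  | zero =>
    exact natDegree_dvd_finrank_of_aeval_eq_zero hp A (by simpa using hA)
  | succ m ih =>
    have hker : aeval (A.restrict (mapsTo_ker_aeval A p)) p = 0 :=
      (aeval_restrict_eq_zero_iff _ _ _).2 fun x hx => hx
    have hrange : aeval (A.restrict (mapsTo_range_aeval A p)) (p ^ (m + 1)) = 0 := by
      refine (aeval_restrict_eq_zero_iff _ _ _).2 ?_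
      rintro _ ⟨v, rfl⟩
      rw [← Module.End.mul_apply, ← map_mul, ← pow_succ, hA, LinearMap.zero_apply]
    rw [← LinearMap.finrank_range_add_finrank_ker (aeval A p)]
    exact dvd_add (ih _ hrange) (natDegree_dvd_finrank_of_aeval_eq_zero hp _ hker)

end Module.End

theorem Irreducible.natDegree_dvd_finrank {K L : Type*} [Field K] [Field L] [Algebra K L]
    [FiniteDimensional K L] {p : K[X]} (hp : Irreducible p) {α : L} (hα : aeval α p = 0) :
    p.natDegree ∣ Module.finrank K L := by
  have hlc : p.leadingCoeff⁻¹ ≠ 0 := inv_ne_zero (leadingCoeff_ne_zero.2 hp.ne_zero)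
  rw [← natDegree_mul_C hlc, minpoly.eq_of_irreducible hp hα]
  exact minpoly.degree_dvd (Algebra.IsIntegral.isIntegral α)

theorem Nat.eq_one_of_dvd_of_notMem_closure_primeFactors {d n e : ℕ} (hed : e ∣ d)
    (hen : e ∣ n) (hn : n ∉ AddSubmonoid.closure {ℓ : ℕ | ℓ.Prime ∧ ℓ ∣ d}) : e = 1 := by
  by_contra he
  obtain ⟨c, rfl⟩ := (Nat.minFac_dvd e).trans hen
  have hℓ : e.minFac ∈ AddSubmonoid.closure {ℓ : ℕ | ℓ.Prime ∧ ℓ ∣ d} :=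
    AddSubmonoid.subset_closure ⟨Nat.minFac_prime he, (Nat.minFac_dvd e).trans hed⟩
  have hmem := AddSubmonoid.nsmul_mem _ hℓ c
  rw [smul_eq_mul, mul_comm] at hmem
  exact hn hmem

theorem Polynomial.Monic.exists_eq_X_sub_C_pow {K : Type*} [Field K] {q p : K[X]} (hq : q.Monic)
    (hp : Irreducible p) (hp1 : p.natDegree = 1) {m : ℕ} (hqp : q = p ^ m) :
    ∃ r : K, q = (X - C r) ^ m := by
  obtain ⟨r, hr⟩ :=
    exists_root_of_degree_eq_one ((degree_eq_iff_natDegree_eq_of_pos one_pos).2 hp1)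
  have hassoc : Associated (X - C r) p :=
    (irreducible_X_sub_C r).associated_of_dvd hp (dvd_iff_isRoot.2 hr)
  exact ⟨r, eq_of_monic_of_associated hq ((monic_X_sub_C r).pow m) (hqp ▸ hassoc.pow_pow.symm)⟩

theorem stmt_6_general {f k V : Type*} [Field f] [Field k] [Algebra f k]
    [FiniteDimensional f k]
    [AddCommGroup V] [Module f V] [FiniteDimensional f V]
    (g : LieSubalgebra f (Module.End f V))
    (hsplit : ∀ A ∈ g, Polynomial.Splits ((minpoly f A).map (algebraMap f k)))
    (hprime : ∀ A ∈ g, ∃ (p : Polynomial f) (m : ℕ),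
      Irreducible p ∧ minpoly f A = p ^ m)
    (hdim : Module.finrank f V ∉
      AddSubmonoid.closure {p : ℕ | p.Prime ∧ p ∣ Module.finrank f k}) :
    ∀ A ∈ g, ∃ (r : f) (m : ℕ),
      minpoly f A = (Polynomial.X - Polynomial.C r) ^ m := by
  intro A hA
  obtain ⟨p, m, hp, hmin⟩ := hprime A hA
  have hA_int : IsIntegral f A := Algebra.IsIntegral.isIntegral A
  have : Nontrivial V := Module.nontrivial_of_finrank_pos <| Nat.pos_of_ne_zero fun h0 =>
    hdim (h0 ▸ zero_mem _)
  obtain ⟨m, rfl⟩ : ∃ n, m = n + 1 :=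
    Nat.exists_eq_succ_of_ne_zero fun hm => minpoly.ne_one f A (by rw [hmin, hm, pow_zero])
  have hpk : Splits (p.map (algebraMap f k)) := by
    refine (hsplit A hA).of_dvd (Polynomial.map_ne_zero (minpoly.ne_zero hA_int))
      (Polynomial.map_dvd _ ?_)
    rw [hmin]
    exact dvd_pow_self p m.succ_ne_zero
  obtain ⟨α, hα⟩ := hpk.exists_eval_eq_zero <| by
    rw [degree_map]; exact (degree_pos_of_irreducible hp).ne'
  have hdeg_k : p.natDegree ∣ Module.finrank f k :=
    hp.natDegree_dvd_finrank (by rwa [aeval_def, eval₂_eq_eval_map])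
  have hdeg_V : p.natDegree ∣ Module.finrank f V :=
    Module.End.natDegree_dvd_finrank_of_aeval_pow_eq_zero hp m A (hmin ▸ minpoly.aeval f A)
  obtain ⟨r, hr⟩ := (minpoly.monic hA_int).exists_eq_X_sub_C_pow hp
    (Nat.eq_one_of_dvd_of_notMem_closure_primeFactors hdeg_k hdeg_V hdim) hmin
  exact ⟨r, m + 1, hr⟩

theorem stmt_6 {f k V : Type*} [Field f] [Field k] [Algebra f k]
    [FiniteDimensional f k] [IsGalois f k]
    [AddCommGroup V] [Module f V] [FiniteDimensional f V]
    (hV : 0 < Module.finrank f V)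
    (g : LieSubalgebra f (Module.End f V))
    [LieRing.IsNilpotent g]
    (hsplit : ∀ A ∈ g, Polynomial.Splits ((minpoly f A).map (algebraMap f k)))
    (hprime : ∀ A ∈ g, ∃ (p : Polynomial f) (m : ℕ),
      Irreducible p ∧ minpoly f A = p ^ m)
    (hdim : Module.finrank f V ∉
      AddSubmonoid.closure {p : ℕ | p.Prime ∧ p ∣ Module.finrank f k}) :
    ∀ A ∈ g, ∃ (r : f) (m : ℕ),
      minpoly f A = (Polynomial.X - Polynomial.C r) ^ m :=
  stmt_6_general g hsplit hprime hdim
end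

section
/- Let g be a nilpotent Lie algebra of linear operators on ℝ^n with n odd. Then g has a common eigenvector in ℝ^n. -/
/-!
Complexify. The nilpotent Lie algebra `ℂ ⊗ L` acts on `ℂ ⊗ V`, which is the direct sum of its
generalized weight spaces. Complex conjugation `χ ↦ (x ↦ conj (χ (conj x)))` is an involution on
the weights that preserves the dimensions of the weight spaces; as these dimensions add up to the
odd number `dim V`, some weight `χ` is self-conjugate. The space of genuine common eigenvectors of
weight `χ` is nonzero and stable under conjugation, so it contains a real vector `1 ⊗ v ≠ 0`,
and `v` is a common eigenvector of `L`.
-/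

open TensorProduct LieModule Module

namespace TensorProduct

variable (W : Type*) [AddCommGroup W] [Module ℝ W]

noncomputable def complexConj : ℂ ⊗[ℝ] W →ₗ[ℝ] ℂ ⊗[ℝ] W :=
  LinearMap.rTensor W Complex.conjAe.toLinearMap

noncomputable def complexRe : ℂ ⊗[ℝ] W →ₗ[ℝ] W :=
  (TensorProduct.lid ℝ W).toLinearMap ∘ₗ LinearMap.rTensor W Complex.reLm

variable {W}

@[simp]
lemma complexConj_tmul (a : ℂ) (w : W) :
    complexConj W (a ⊗ₜ w) = (starRingEnd ℂ) a ⊗ₜ w :=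
  rfl

@[simp]
lemma complexRe_tmul (a : ℂ) (w : W) : complexRe W (a ⊗ₜ w) = a.re • w := by
  simp [complexRe]

@[simp]
lemma complexConj_complexConj (m : ℂ ⊗[ℝ] W) : complexConj W (complexConj W m) = m := by
  induction m with
  | zero => simp
  | tmul a w => simp
  | add x y hx hy => simp only [map_add, hx, hy]

lemma complexConj_injective : Function.Injective (complexConj W) :=
  Function.LeftInverse.injective complexConj_complexConj

lemma complexConj_smul (c : ℂ) (m : ℂ ⊗[ℝ] W) :
    complexConj W (c • m) = (starRingEnd ℂ) c • complexConj W m := by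
  induction m with
  | zero => simp
  | tmul a w => simp [smul_tmul']
  | add x y hx hy => simp only [smul_add, map_add, hx, hy]

lemma one_tmul_complexRe (m : ℂ ⊗[ℝ] W) :
    (1 : ℂ) ⊗ₜ complexRe W m = (2⁻¹ : ℝ) • (m + complexConj W m) := by
  induction m with
  | zero => simp
  | tmul a w =>
    rw [complexRe_tmul, complexConj_tmul, ← add_tmul, smul_tmul', tmul_smul, smul_tmul']
    congr 1
    rw [Complex.real_smul, Complex.real_smul, mul_one, Complex.re_eq_add_conj]
    push_cast
    ring
  | add x y hx hy => simp only [map_add, tmul_add, hx, hy, smul_add]; abel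

lemma eq_one_tmul_complexRe {m : ℂ ⊗[ℝ] W} (hm : complexConj W m = m) :
    m = (1 : ℂ) ⊗ₜ complexRe W m := by
  rw [one_tmul_complexRe, hm, ← two_smul ℝ m, smul_smul]
  norm_num

lemma exists_complexConj_eq_self {p : Submodule ℂ (ℂ ⊗[ℝ] W)}
    (hp : ∀ m ∈ p, complexConj W m ∈ p) (hne : p ≠ ⊥) :
    ∃ w ∈ p, w ≠ 0 ∧ complexConj W w = w := by
  obtain ⟨m, hm, hm0⟩ := p.ne_bot_iff.mp hne
  by_cases h : m + complexConj W m = 0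
  · refine ⟨Complex.I • m, p.smul_mem _ hm, smul_ne_zero Complex.I_ne_zero hm0, ?_⟩
    rw [complexConj_smul, eq_neg_of_add_eq_zero_right h, Complex.conj_I, neg_smul, smul_neg,
      neg_neg]
  · refine ⟨m + complexConj W m, p.add_mem hm (hp m hm), h, ?_⟩
    rw [map_add, complexConj_complexConj, add_comm]

lemma finrank_le_of_complexConj_mem [FiniteDimensional ℝ W] {p q : Submodule ℂ (ℂ ⊗[ℝ] W)}
    (h : ∀ m ∈ p, complexConj W m ∈ q) : finrank ℂ p ≤ finrank ℂ q := by
  have : FiniteDimensional ℝ q := inferInstanceAs (FiniteDimensional ℝ (q.restrictScalars ℝ))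
  have hle : finrank ℝ p ≤ finrank ℝ q :=
    LinearMap.finrank_le_finrank_of_injective
      (f := (complexConj W).restrict (p := p.restrictScalars ℝ) (q := q.restrictScalars ℝ) h)
      fun x y hxy => Subtype.ext (complexConj_injective (congrArg Subtype.val hxy))
  rw [← Module.finrank_mul_finrank ℝ ℂ p, ← Module.finrank_mul_finrank ℝ ℂ q,
    Complex.finrank_real_complex] at hle
  omega

end TensorProduct

lemma Function.Involutive.exists_apply_eq_self_of_odd_sum {ι : Type*} [Fintype ι] {σ : ι → ι}
    (hσ : Function.Involutive σ) {f : ι → ℕ} (hf : ∀ i, f (σ i) = f i) (hodd : Odd (∑ i, f i)) :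
    ∃ i, σ i = i := by
  by_contra! hfree
  have hzero : ((∑ i, f i : ℕ) : ZMod 2) = 0 := by
    rw [Nat.cast_sum]
    exact Finset.sum_ninvolution σ (fun i => by rw [hf]; exact CharTwo.add_self_eq_zero _)
      (fun i _ => hfree i) (fun i => Finset.mem_univ _) hσ
  rw [ZMod.natCast_eq_zero_iff_even] at hzero
  exact Nat.not_even_iff_odd.mpr hodd hzero

namespace LieModule

lemma finrank_eq_sum_finrank_genWeightSpace (K L M : Type*) [Field K] [LieRing L]
    [LieAlgebra K L] [AddCommGroup M] [Module K M] [LieRingModule L M] [LieModule K L M]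
    [FiniteDimensional K M] [LieRing.IsNilpotent L] [IsTriangularizable K L M] :
    finrank K M = ∑ χ : Weight K L M, finrank K (genWeightSpace M χ) := by
  classical
  have hds := DirectSum.isInternal_submodule_of_iSupIndep_of_iSup_eq_top
    (LieSubmodule.iSupIndep_toSubmodule.mpr <| iSupIndep_genWeightSpace' K L M)
    (LieSubmodule.iSup_toSubmodule_eq_top.mpr <| iSup_genWeightSpace_eq_top' K L M)
  rw [← Module.finrank_directSum]
  exact (LinearEquiv.ofBijective (DirectSum.coeLinearMap _) hds).finrank_eq.symm

variable (L V : Type*) [LieRing L] [LieAlgebra ℝ L] [AddCommGroup V] [Module ℝ V]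
  [LieRingModule L V] [LieModule ℝ L V]

lemma complexConj_toEnd (x : ℂ ⊗[ℝ] L) (m : ℂ ⊗[ℝ] V) :
    complexConj V (toEnd ℂ _ _ x m) = toEnd ℂ _ _ (complexConj L x) (complexConj V m) := by
  induction x with
  | zero => simp
  | add x y hx hy => simp only [map_add, LinearMap.add_apply, hx, hy]
  | tmul a y =>
    induction m with
    | zero => simp
    | add m n hm hn => simp only [map_add, hm, hn]
    | tmul b v =>
      change complexConj V ((a * b) ⊗ₜ ⁅y, v⁆) =
        (starRingEnd ℂ a * starRingEnd ℂ b) ⊗ₜ ⁅y, v⁆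
      simp

lemma semiconj_complexConj_toEnd_sub (x : ℂ ⊗[ℝ] L) (c : ℂ) :
    Function.Semiconj (complexConj V) ⇑(toEnd ℂ _ (ℂ ⊗[ℝ] V) x - c • 1)
      ⇑(toEnd ℂ _ (ℂ ⊗[ℝ] V) (complexConj L x) - starRingEnd ℂ c • 1) := fun m => by
  simp only [LinearMap.sub_apply, LinearMap.smul_apply, Module.End.one_apply, map_sub,
    complexConj_toEnd, complexConj_smul]

variable {L V}

lemma complexConj_mem_weightSpace {χ : ℂ ⊗[ℝ] L → ℂ} {m : ℂ ⊗[ℝ] V}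
    (hm : m ∈ weightSpace (ℂ ⊗[ℝ] V) χ) :
    complexConj V m ∈
      weightSpace (ℂ ⊗[ℝ] V) fun x => starRingEnd ℂ (χ (complexConj L x)) := by
  rw [mem_weightSpace] at hm ⊢
  intro x
  have := complexConj_toEnd L V (complexConj L x) m
  rw [complexConj_complexConj, toEnd_apply_apply, toEnd_apply_apply, hm, complexConj_smul] at this
  exact this.symm

variable [LieRing.IsNilpotent L]

lemma complexConj_mem_genWeightSpace {χ : ℂ ⊗[ℝ] L → ℂ} {m : ℂ ⊗[ℝ] V}
    (hm : m ∈ genWeightSpace (ℂ ⊗[ℝ] V) χ) :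
    complexConj V m ∈
      genWeightSpace (ℂ ⊗[ℝ] V) fun x => starRingEnd ℂ (χ (complexConj L x)) := by
  rw [mem_genWeightSpace] at hm ⊢
  intro x
  obtain ⟨k, hk⟩ := hm (complexConj L x)
  have := (semiconj_complexConj_toEnd_sub L V (complexConj L x) (χ (complexConj L x))).iterate_right
    k m
  refine ⟨k, ?_⟩
  simpa [← Module.End.pow_apply, hk] using this.symm

noncomputable def Weight.conj (χ : Weight ℂ (ℂ ⊗[ℝ] L) (ℂ ⊗[ℝ] V)) :
    Weight ℂ (ℂ ⊗[ℝ] L) (ℂ ⊗[ℝ] V) where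
  toFun x := starRingEnd ℂ (χ (complexConj L x))
  genWeightSpace_ne_bot' := by
    obtain ⟨m, hm, hm0⟩ := χ.exists_ne_zero
    intro hbot
    have hmem := complexConj_mem_genWeightSpace (L := L) hm
    rw [hbot, LieSubmodule.mem_bot] at hmem
    exact hm0 (complexConj_injective (hmem.trans (map_zero _).symm))

@[simp]
lemma Weight.conj_apply (χ : Weight ℂ (ℂ ⊗[ℝ] L) (ℂ ⊗[ℝ] V)) (x : ℂ ⊗[ℝ] L) :
    χ.conj x = starRingEnd ℂ (χ (complexConj L x)) :=
  rfl

lemma Weight.conj_involutive : Function.Involutive (Weight.conj (L := L) (V := V)) :=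
  fun χ => Weight.ext fun x => by simp

lemma finrank_genWeightSpace_conj [FiniteDimensional ℝ V]
    (χ : Weight ℂ (ℂ ⊗[ℝ] L) (ℂ ⊗[ℝ] V)) :
    finrank ℂ (genWeightSpace (ℂ ⊗[ℝ] V) χ.conj) = finrank ℂ (genWeightSpace (ℂ ⊗[ℝ] V) χ) := by
  have key (ψ : Weight ℂ (ℂ ⊗[ℝ] L) (ℂ ⊗[ℝ] V)) :
      finrank ℂ (genWeightSpace (ℂ ⊗[ℝ] V) ψ) ≤ finrank ℂ (genWeightSpace (ℂ ⊗[ℝ] V) ψ.conj) :=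
    finrank_le_of_complexConj_mem (p := (genWeightSpace _ ψ).toSubmodule)
      (q := (genWeightSpace _ ψ.conj).toSubmodule) fun _ => complexConj_mem_genWeightSpace
  refine le_antisymm ?_ (key χ)
  have := key χ.conj
  rwa [Weight.conj_involutive χ] at this

lemma exists_weight_conj_eq_self [FiniteDimensional ℝ V] (hodd : Odd (finrank ℝ V)) :
    ∃ χ : Weight ℂ (ℂ ⊗[ℝ] L) (ℂ ⊗[ℝ] V), χ.conj = χ := by
  refine Weight.conj_involutive.exists_apply_eq_self_of_odd_sum
    (f := fun χ => finrank ℂ (genWeightSpace (ℂ ⊗[ℝ] V) χ)) finrank_genWeightSpace_conj ?_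
  rwa [← finrank_eq_sum_finrank_genWeightSpace, Module.finrank_baseChange]

theorem exists_forall_lie_eq_smul_of_odd_finrank [FiniteDimensional ℝ V]
    (hodd : Odd (finrank ℝ V)) : ∃ v : V, v ≠ 0 ∧ ∀ x : L, ∃ c : ℝ, ⁅x, v⁆ = c • v := by
  obtain ⟨χ, hχ⟩ := exists_weight_conj_eq_self (L := L) hodd
  let E := (weightSpace (ℂ ⊗[ℝ] V) χ).toSubmodule
  have hE : ∀ m ∈ E, complexConj V m ∈ E := fun m hm => by
    have h := complexConj_mem_weightSpace hm
    simp only [← Weight.conj_apply, hχ] at h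
    exact h
  have hE_ne : E ≠ ⊥ := by
    obtain ⟨m, hm0, hm⟩ := exists_forall_lie_eq_smul ℂ (ℂ ⊗[ℝ] L) (ℂ ⊗[ℝ] V) χ
    exact (Submodule.ne_bot_iff _).mpr ⟨m, (mem_weightSpace _ _).mpr hm, hm0⟩
  obtain ⟨w, hw, hw0, hw_real⟩ := exists_complexConj_eq_self hE hE_ne
  obtain ⟨v, rfl⟩ : ∃ v, w = (1 : ℂ) ⊗ₜ v := ⟨_, eq_one_tmul_complexRe hw_real⟩
  refine ⟨v, fun hv => hw0 (by rw [hv, tmul_zero]), fun x => ⟨(χ (1 ⊗ₜ x)).re, ?_⟩⟩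
  have := congrArg (complexRe V) ((mem_weightSpace _ _).mp hw (1 ⊗ₜ x))
  rwa [← toEnd_apply_apply (R := ℂ), toEnd_baseChange, LinearMap.baseChange_tmul, smul_tmul',
    smul_eq_mul, mul_one, complexRe_tmul, complexRe_tmul, Complex.one_re, one_smul,
    toEnd_apply_apply] at this

end LieModule

attribute [local instance 100] LieRing.ofAssociativeRing

theorem stmt_9 {n : ℕ} (hn : Odd n)
    (g : LieSubalgebra ℝ (Module.End ℝ (Fin n → ℝ)))
    [LieRing.IsNilpotent g] :
    ∃ u : Fin n → ℝ, u ≠ 0 ∧ ∀ A ∈ g, ∃ c : ℝ, A u = c • u := by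
  obtain ⟨u, hu0, hu⟩ := LieModule.exists_forall_lie_eq_smul_of_odd_finrank (L := g)
    (V := Fin n → ℝ) (by rwa [Module.finrank_fin_fun])
  exact ⟨u, hu0, fun A hA => hu ⟨A, hA⟩⟩
end

section
/- Let V be a finite-dimensional real vector space and g a nilpotent Lie algebra of linear operators on V preserving a direct sum decomposition V = W_1 ⊕ ⋯ ⊕ W_m. Let V' be the span of all common eigenvectors of g in V. Then dim V' is at least the number of indices i for which dim W_i is odd. -/
/-!
Let `U` be an odd-dimensional `g`-invariant subspace, initially an odd-dimensional summand
`W i`. For `A ∈ g` the characteristic polynomial of `A` on `U` has odd degree and its non-real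
roots pair off, so `A` has a real eigenvalue of odd multiplicity: the corresponding generalized
eigenspace is odd-dimensional, and it is `g`-invariant because `g` is nilpotent. If it is proper
for some `A`, recurse into it. Otherwise every element of `g` has a single eigenvalue on `U`, so
`U` is a generalized weight space of `g` and contains a common eigenvector. Common eigenvectors
taken from different summands of a direct sum are linearly independent.
-/

open Polynomial Module

namespace Real

theorem exists_isRoot_of_odd_natDegree {p : ℝ[X]} (hp : Odd p.natDegree) : ∃ x, p.IsRoot x := by
  induction hn : p.natDegree using Nat.strong_induction_on generalizing p with
  | _ n ih =>
  have hp0 : p ≠ 0 := by rintro rfl; simp at hp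
  obtain ⟨i, hi, q, rfl⟩ :=
    WfDvdMonoid.exists_irreducible_factor (not_isUnit_of_natDegree_pos p hp.pos) hp0
  have hq0 : q ≠ 0 := right_ne_zero_of_mul hp0
  have hdeg : (i * q).natDegree = i.natDegree + q.natDegree := natDegree_mul hi.ne_zero hq0
  have hi_deg : i.natDegree = 1 ∨ i.natDegree = 2 := by
    have := hi.natDegree_pos
    have := hi.natDegree_le_two
    omega
  rcases hi_deg with h1 | h2
  · obtain ⟨x, hx⟩ :=
      exists_root_of_degree_eq_one ((degree_eq_iff_natDegree_eq_of_pos one_pos).mpr h1)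
    exact ⟨x, root_mul_right_of_isRoot q hx⟩
  · rw [hdeg, h2] at hp hn
    obtain ⟨x, hx⟩ := ih q.natDegree (by omega) ((Nat.odd_add'.mp hp).mpr even_two) rfl
    exact ⟨x, root_mul_left_of_isRoot i hx⟩

theorem odd_card_roots_of_odd_natDegree {p : ℝ[X]} (hp : Odd p.natDegree) :
    Odd (Multiset.card p.roots) := by
  obtain ⟨q, hpq, hdeg, hq⟩ := p.exists_prod_multiset_X_sub_C_mul
  have hq0 : q ≠ 0 := by
    rintro rfl
    rw [mul_zero] at hpq
    simp [← hpq] at hp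
  have hq_even : Even q.natDegree := by
    by_contra hodd
    obtain ⟨x, hx⟩ := exists_isRoot_of_odd_natDegree (Nat.not_even_iff_odd.mp hodd)
    simpa [hq] using (mem_roots hq0).mpr hx
  rw [← hdeg] at hp
  exact (Nat.odd_add.mp hp).mpr hq_even

theorem exists_odd_rootMultiplicity_of_odd_natDegree {p : ℝ[X]} (hp : Odd p.natDegree) :
    ∃ μ, Odd (p.rootMultiplicity μ) := by
  have hsum : Odd (∑ μ ∈ p.roots.toFinset, p.roots.count μ) := by
    rw [Multiset.toFinset_sum_count_eq]
    exact odd_card_roots_of_odd_natDegree hp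
  rw [Finset.odd_sum_iff_odd_card_odd] at hsum
  obtain ⟨μ, hμ⟩ := Finset.card_pos.mp hsum.pos
  exact ⟨μ, count_roots p ▸ (Finset.mem_filter.mp hμ).2⟩

end Real

theorem Module.End.exists_odd_finrank_maxGenEigenspace {M : Type*} [AddCommGroup M]
    [Module ℝ M] [FiniteDimensional ℝ M] (φ : Module.End ℝ M) (h : Odd (finrank ℝ M)) :
    ∃ μ : ℝ, Odd (finrank ℝ (φ.maxGenEigenspace μ)) := by
  simp_rw [LinearMap.finrank_maxGenEigenspace_eq]
  exact Real.exists_odd_rootMultiplicity_of_odd_natDegree (φ.charpoly_natDegree ▸ h)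

namespace LieModule

theorem exists_forall_lie_eq_smul_of_odd_finrank_s11 {L M : Type*} [LieRing L] [LieAlgebra ℝ L]
    [LieRing.IsNilpotent L] [AddCommGroup M] [Module ℝ M] [LieRingModule L M] [LieModule ℝ L M]
    [FiniteDimensional ℝ M] (h : Odd (finrank ℝ M)) :
    ∃ m : M, m ≠ 0 ∧ ∀ x : L, ∃ c : ℝ, ⁅x, m⁆ = c • m := by
  induction hn : finrank ℝ M using Nat.strong_induction_on generalizing M with
  | _ n ih =>
  choose μ hμ using fun x : L ↦ (toEnd ℝ L M x).exists_odd_finrank_maxGenEigenspace h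
  by_cases htop : ∀ x, genWeightSpaceOf M (μ x) x = ⊤
  · have : Nontrivial M := Module.nontrivial_of_finrank_pos h.pos
    have hμ_top : genWeightSpace M μ = ⊤ := by simp [genWeightSpace, htop]
    obtain ⟨m, hm0, hm⟩ := exists_forall_lie_eq_smul ℝ L M ⟨μ, hμ_top ▸ top_ne_bot⟩
    exact ⟨m, hm0, fun x ↦ ⟨μ x, hm x⟩⟩
  · obtain ⟨x, hx⟩ := not_forall.mp htop
    have hlt : finrank ℝ (genWeightSpaceOf M (μ x) x) < n :=
      hn ▸ Submodule.finrank_lt (fun h ↦ hx (LieSubmodule.toSubmodule_injective h))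
    have hodd : Odd (finrank ℝ (genWeightSpaceOf M (μ x) x)) := hμ x
    obtain ⟨m, hm0, hm⟩ := ih _ hlt hodd rfl
    exact ⟨m, by simpa using hm0, fun y ↦ (hm y).imp fun c hc ↦ congrArg Subtype.val hc⟩

end LieModule

theorem card_le_finrank_span_of_iSupIndep {ι K V : Type*} [Field K] [AddCommGroup V]
    [Module K V] [FiniteDimensional K V] {W : ι → Submodule K V} (hW : iSupIndep W)
    {S : Set V} (s : Finset ι) (hs : ∀ i ∈ s, ∃ u ∈ W i, u ≠ 0 ∧ u ∈ S) :
    s.card ≤ finrank K (Submodule.span K S) := by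
  choose u hu using fun i : s ↦ hs i i.2
  have hli : LinearIndependent K u := (hW.comp Subtype.val_injective).linearIndependent _
    (fun i ↦ (hu i).1) (fun i ↦ (hu i).2.1)
  calc s.card = finrank K (Submodule.span K (Set.range u)) := by
        rw [finrank_span_eq_card hli, Fintype.card_coe]
    _ ≤ finrank K (Submodule.span K S) :=
        Submodule.finrank_mono <|
          Submodule.span_mono (Set.range_subset_iff.mpr fun i ↦ (hu i).2.2)

attribute [local instance 100] LieRing.ofAssociativeRing

theorem LieSubalgebra.exists_common_eigenvector_mem_of_odd_finrank {V : Type*}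
    [AddCommGroup V] [Module ℝ V] (g : LieSubalgebra ℝ (Module.End ℝ V))
    [LieRing.IsNilpotent g] (W : Submodule ℝ V) [FiniteDimensional ℝ W]
    (hW : ∀ A ∈ g, ∀ x ∈ W, A x ∈ W) (hodd : Odd (finrank ℝ W)) :
    ∃ u ∈ W, u ≠ 0 ∧ ∀ A ∈ g, ∃ c : ℝ, A u = c • u := by
  let N : LieSubmodule ℝ g V := { W with lie_mem := fun {A v} hv ↦ hW A A.2 v hv }
  have : FiniteDimensional ℝ N := inferInstanceAs (FiniteDimensional ℝ W)
  obtain ⟨u, hu0, hu⟩ :=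
    LieModule.exists_forall_lie_eq_smul_of_odd_finrank_s11 (L := g) (M := N) hodd
  exact ⟨u, u.2, by simpa using hu0,
    fun A hA ↦ (hu ⟨A, hA⟩).imp fun c hc ↦ congrArg Subtype.val hc⟩

theorem stmt_11 {V : Type*} [AddCommGroup V] [Module ℝ V]
    [FiniteDimensional ℝ V]
    (g : LieSubalgebra ℝ (Module.End ℝ V))
    [LieRing.IsNilpotent g]
    {m : ℕ} (W : Fin m → Submodule ℝ V)
    (hint : DirectSum.IsInternal W)
    (hinv : ∀ A ∈ g, ∀ i, ∀ x ∈ W i, A x ∈ W i) :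
    (Finset.univ.filter fun i => Odd (Module.finrank ℝ (W i))).card ≤
      Module.finrank ℝ (Submodule.span ℝ
        {u : V | u ≠ 0 ∧ ∀ A ∈ g, ∃ c : ℝ, A u = c • u}) := by
  refine card_le_finrank_span_of_iSupIndep hint.submodule_iSupIndep _ fun i hi ↦ ?_
  obtain ⟨u, huW, hu0, hu⟩ := g.exists_common_eigenvector_mem_of_odd_finrank (W i)
    (fun A hA ↦ hinv A hA i) (Finset.mem_filter.mp hi).2
  exact ⟨u, huW, hu0, hu0, hu⟩
end

section
/- Let n be odd and let α be a monic real polynomial. Let T be a family of pairwise commuting n × n real matrices with α(T) = 0 for all T in the family. Then there exists a nonzero vector u ∈ ℝ^n that is a common eigenvector of all matrices in the family. -/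
/-!
A real polynomial of odd degree has a real root of odd multiplicity, so every endomorphism of an
odd-dimensional real space has an odd-dimensional generalized eigenspace. Let `U` be minimal among
the odd-dimensional subspaces invariant under the family. For `T` in the family, some generalized
eigenspace of `T` meets `U` in an odd-dimensional subspace, which commutativity makes invariant
under the family, so it is all of `U`. A minimal nonzero invariant subspace of `U` then lies in an
eigenspace of every `T`: its intersection with that eigenspace is invariant and nonzero.
-/

open Polynomial Module Module.End

lemma Irreducible.natDegree_eq_two_of_forall_not_isRoot {q : ℝ[X]} (hq : Irreducible q)
    (hroot : ∀ r, ¬ q.IsRoot r) : q.natDegree = 2 := by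
  have hne_one : q.natDegree ≠ 1 := fun h ↦
    have ⟨r, hr⟩ := exists_root_of_degree_eq_one (degree_eq_iff_natDegree_eq hq.ne_zero |>.mpr h)
    hroot r hr
  have := hq.natDegree_pos
  have := hq.natDegree_le_two
  omega

namespace Polynomial

lemma rootMultiplicity_mul_of_not_isRoot {R : Type*} [CommRing R] [IsDomain R] {p q : R[X]}
    {r : R} (hpq : p * q ≠ 0) (hp : ¬ p.IsRoot r) :
    (p * q).rootMultiplicity r = q.rootMultiplicity r := by
  rw [rootMultiplicity_mul hpq, rootMultiplicity_eq_zero hp, zero_add]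

/- Split off either `(X - r₀) ^ m` for a root `r₀` of even multiplicity `m`, or, if there is no
real root, an irreducible quadratic factor; the cofactor has smaller odd degree. -/
theorem exists_odd_rootMultiplicity_of_odd_natDegree {p : ℝ[X]} (hp : Odd p.natDegree) :
    ∃ r, Odd (p.rootMultiplicity r) := by
  induction h : p.natDegree using Nat.strong_induction_on generalizing p with
  | _ d ih =>
  subst h
  have hp0 : p ≠ 0 := by rintro rfl; simp at hp
  by_cases hroot : ∃ r, p.IsRoot r
  · obtain ⟨r₀, hr₀⟩ := hroot
    set m := p.rootMultiplicity r₀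
    obtain hm | hm := Nat.even_or_odd m
    swap
    · exact ⟨r₀, hm⟩
    set t := p /ₘ (X - C r₀) ^ m
    have hfac : (X - C r₀) ^ m * t = p := p.pow_mul_divByMonic_rootMultiplicity_eq r₀
    have ht0 : t ≠ 0 := by rintro h; simp [h, eq_comm, hp0] at hfac
    have htr₀ : ¬ t.IsRoot r₀ := eval_divByMonic_pow_rootMultiplicity_ne_zero r₀ hp0
    have hdeg : p.natDegree = m + t.natDegree := by
      rw [← hfac, natDegree_mul (pow_ne_zero _ (X_sub_C_ne_zero r₀)) ht0, natDegree_pow,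
        natDegree_X_sub_C, mul_one]
    have hm0 : 0 < m := (rootMultiplicity_pos hp0).mpr hr₀
    have ht : Odd t.natDegree := by rw [hdeg] at hp; exact (Nat.odd_add'.mp hp).mpr hm
    obtain ⟨r, hr⟩ := ih t.natDegree (by omega) ht rfl
    have hrr₀ : r ≠ r₀ := by
      rintro rfl
      simp [rootMultiplicity_eq_zero htr₀] at hr
    refine ⟨r, ?_⟩
    rwa [← hfac, rootMultiplicity_mul_of_not_isRoot (hfac ▸ hp0)]
    simp [sub_eq_zero, hrr₀]
  · simp only [not_exists] at hroot
    obtain ⟨q, hq, s, rfl⟩ := WfDvdMonoid.exists_irreducible_factor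
      (fun hu ↦ by simp [natDegree_eq_zero_of_isUnit hu] at hp) hp0
    have hq_root (r : ℝ) : ¬ q.IsRoot r := fun h ↦ hroot r (h.dvd (dvd_mul_right q s))
    have hs0 : s ≠ 0 := right_ne_zero_of_mul hp0
    rw [natDegree_mul hq.ne_zero hs0, hq.natDegree_eq_two_of_forall_not_isRoot hq_root] at hp ih
    obtain ⟨r, hr⟩ := ih s.natDegree (by omega) (Nat.odd_add'.mp hp |>.mpr even_two) rfl
    exact ⟨r, by rwa [rootMultiplicity_mul_of_not_isRoot hp0 (hq_root r)]⟩

end Polynomial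

namespace Module.End

section Field

variable {K V : Type*} [Field K] [AddCommGroup V] [Module K V]

lemma inf_genEigenspace_ne_bot_iff {f : End K V} {p : Submodule K V} (hp : p ∈ f.invtSubmodule)
    {μ : K} {k : ℕ∞} : p ⊓ f.genEigenspace μ k ≠ ⊥ ↔ HasUnifEigenvalue (f.restrict hp) μ k := by
  rw [Submodule.inf_genEigenspace f p hp]
  exact (Submodule.map_injective_of_injective p.injective_subtype).ne_iff' (Submodule.map_bot _)

lemma inf_eigenspace_ne_bot_of_le_maxGenEigenspace {f : End K V} {p : Submodule K V} {μ : K}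
    (hp : p ∈ f.invtSubmodule) (hp0 : p ≠ ⊥) (hle : p ≤ f.maxGenEigenspace μ) :
    p ⊓ f.eigenspace μ ≠ ⊥ := by
  have hgen := (inf_genEigenspace_ne_bot_iff hp).mp (inf_eq_left.mpr hle ▸ hp0)
  exact (inf_genEigenspace_ne_bot_iff hp).mpr (hgen.lt zero_lt_one)

theorem exists_forall_hasEigenvector_of_le_maxGenEigenspace [FiniteDimensional K V]
    {𝒯 : Set (End K V)} (hcomm : ∀ S ∈ 𝒯, ∀ T ∈ 𝒯, Commute S T) {U : Submodule K V}
    (hU0 : U ≠ ⊥) (hU : ∀ T ∈ 𝒯, U ∈ T.invtSubmodule)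
    (hgen : ∀ T ∈ 𝒯, ∃ μ, U ≤ T.maxGenEigenspace μ) :
    ∃ v ∈ U, v ≠ 0 ∧ ∀ T ∈ 𝒯, ∃ c : K, T v = c • v := by
  obtain ⟨W, hWU, ⟨hW0, hW⟩, hWmin⟩ := exists_minimal_le_of_wellFoundedLT
    (fun p : Submodule K V ↦ p ≠ ⊥ ∧ ∀ T ∈ 𝒯, p ∈ T.invtSubmodule) U ⟨hU0, hU⟩
  have hWeigen : ∀ T ∈ 𝒯, ∃ μ, W ≤ T.eigenspace μ := by
    intro T hT
    obtain ⟨μ, hμ⟩ := hgen T hT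
    refine ⟨μ, le_inf_iff.mp (hWmin ⟨?_, fun S hS ↦ ?_⟩ inf_le_left) |>.2⟩
    · exact inf_eigenspace_ne_bot_of_le_maxGenEigenspace (hW T hT) hW0 (hWU.trans hμ)
    · exact invtSubmodule.inf_mem (hW S hS) (mapsTo_genEigenspace_of_comm (hcomm T hT S hS) μ 1)
  obtain ⟨v, hvW, hv0⟩ := Submodule.exists_mem_ne_zero_of_ne_bot hW0
  refine ⟨v, hWU hvW, hv0, fun T hT ↦ ?_⟩
  obtain ⟨μ, hμ⟩ := hWeigen T hT
  exact ⟨μ, mem_eigenspace_iff.mp (hμ hvW)⟩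

end Field

variable {V : Type*} [AddCommGroup V] [Module ℝ V] [FiniteDimensional ℝ V]

theorem exists_odd_finrank_maxGenEigenspace_s12 (f : End ℝ V) (h : Odd (finrank ℝ V)) :
    ∃ μ, Odd (finrank ℝ (f.maxGenEigenspace μ)) := by
  simp_rw [LinearMap.finrank_maxGenEigenspace_eq]
  exact exists_odd_rootMultiplicity_of_odd_natDegree (f.charpoly_natDegree ▸ h)

theorem exists_odd_finrank_inf_maxGenEigenspace {f : End ℝ V} {U : Submodule ℝ V}
    (hU : U ∈ f.invtSubmodule) (h : Odd (finrank ℝ U)) :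
    ∃ μ, Odd (finrank ℝ ↥(U ⊓ f.maxGenEigenspace μ)) := by
  obtain ⟨μ, hμ⟩ := exists_odd_finrank_maxGenEigenspace_s12 (f.restrict hU) h
  refine ⟨μ, ?_⟩
  rwa [Submodule.inf_genEigenspace f U hU, Submodule.finrank_map_subtype_eq]

theorem exists_forall_hasEigenvector_of_odd_finrank (h : Odd (finrank ℝ V)) {𝒯 : Set (End ℝ V)}
    (hcomm : ∀ S ∈ 𝒯, ∀ T ∈ 𝒯, Commute S T) :
    ∃ v ≠ 0, ∀ T ∈ 𝒯, ∃ c : ℝ, T v = c • v := by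
  obtain ⟨U, ⟨hUodd, hU⟩, hUmin⟩ := exists_minimal_of_wellFoundedLT
    (fun p : Submodule ℝ V ↦ Odd (finrank ℝ p) ∧ ∀ T ∈ 𝒯, p ∈ T.invtSubmodule)
    ⟨⊤, by rwa [finrank_top], fun T _ ↦ invtSubmodule.top_mem T⟩
  have hU0 : U ≠ ⊥ := by rintro rfl; simp at hUodd
  have hgen : ∀ T ∈ 𝒯, ∃ μ, U ≤ T.maxGenEigenspace μ := by
    intro T hT
    obtain ⟨μ, hμ⟩ := exists_odd_finrank_inf_maxGenEigenspace (hU T hT) hUodd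
    refine ⟨μ, le_inf_iff.mp (hUmin ⟨hμ, fun S hS ↦ ?_⟩ inf_le_left) |>.2⟩
    exact invtSubmodule.inf_mem (hU S hS) (mapsTo_maxGenEigenspace_of_comm (hcomm T hT S hS) μ)
  obtain ⟨v, -, hv0, hv⟩ := exists_forall_hasEigenvector_of_le_maxGenEigenspace hcomm hU0 hU hgen
  exact ⟨v, hv0, hv⟩

end Module.End

theorem stmt_12_general {n : ℕ} (hn : Odd n)
    (𝒯 : Set (Matrix (Fin n) (Fin n) ℝ))
    (hcomm : ∀ S ∈ 𝒯, ∀ T ∈ 𝒯, S * T = T * S) :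
    ∃ u : Fin n → ℝ, u ≠ 0 ∧ ∀ T ∈ 𝒯, ∃ c : ℝ, T.mulVec u = c • u := by
  obtain ⟨u, hu0, hu⟩ := exists_forall_hasEigenvector_of_odd_finrank
    (𝒯 := Matrix.toLinAlgEquiv' '' 𝒯) (by rwa [finrank_fin_fun])
    (by rintro _ ⟨S, hS, rfl⟩ _ ⟨T, hT, rfl⟩; exact Commute.map (hcomm S hS T hT) _)
  exact ⟨u, hu0, fun T hT ↦ hu _ ⟨T, hT, rfl⟩⟩

theorem stmt_12 {n : ℕ} (hn : Odd n) (α : Polynomial ℝ) (hα : α.Monic)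
    (𝒯 : Set (Matrix (Fin n) (Fin n) ℝ))
    (hcomm : ∀ S ∈ 𝒯, ∀ T ∈ 𝒯, S * T = T * S)
    (hann : ∀ T ∈ 𝒯, Polynomial.aeval T α = 0) :
    ∃ u : Fin n → ℝ, u ≠ 0 ∧ ∀ T ∈ 𝒯, ∃ c : ℝ, T.mulVec u = c • u :=
  stmt_12_general hn 𝒯 hcomm
end
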